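/- arXiv:2004.07899 — 2 statements merged into one kernel-verified Lean document; each statement's English description precedes it below -/
import Mathlib

section
/- Let c : Ω → ℂ be a function on an open set Ω ⊆ ℝ^N that is uniformly continuous on a neighborhood of the support of g ∈ L^1(Ω), where g has compact support in Ω. Let η_ε be a standard mollifier. Then ‖c · (η_ε * g) − η_ε * (c g)‖_{L^1(Ω)} → 0 as ε → 0; more precisely, if |c(y) − c(z)| ≤ δ whenever |y − z| ≤ ε, then ‖c · (η_ε * g) − η_ε * (c g)‖_{L^1(Ω)} ≤ δ ‖g‖_{L^1(Ω)}. -/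
open MeasureTheory Filter Topology Metric
open scoped ENNReal NNReal

lemma aux_bound {N : ℕ} (Ω : Set (EuclideanSpace ℝ (Fin N)))
    (c : EuclideanSpace ℝ (Fin N) → ℂ) (g : EuclideanSpace ℝ (Fin N) → ℂ)
    (hg : Integrable g) (hgΩ : tsupport g ⊆ Ω)
    (hcg : Integrable (fun y => c y * g y))
    (η : EuclideanSpace ℝ (Fin N) → ℝ) (hη_cont : Continuous η)
    (hη_nonneg : ∀ x, 0 ≤ η x) (hη_supp : tsupport η ⊆ closedBall 0 1)
    (hη_int : ∫ x, η x = 1)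
    (ε δ : ℝ) (hε : 0 < ε) (hδ : 0 ≤ δ)
    (H : ∀ x y, y ∈ tsupport g → dist x y ≤ ε → ‖c x - c y‖ ≤ δ) :
    (∫ x in Ω, ‖c x * (∫ y, (((ε ^ N)⁻¹ * η (ε⁻¹ • (x - y)) : ℝ) : ℂ) * g y)
          - ∫ y, (((ε ^ N)⁻¹ * η (ε⁻¹ • (x - y)) : ℝ) : ℂ) * (c y * g y)‖)
        ≤ δ * ∫ x in Ω, ‖g x‖ := by
  have hεN : (0:ℝ) < ε ^ N := pow_pos hε N
  set K : EuclideanSpace ℝ (Fin N) → ℝ := fun u => (ε ^ N)⁻¹ * η (ε⁻¹ • u) with hK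
  have hK_nonneg : ∀ u, 0 ≤ K u := fun u => mul_nonneg (inv_nonneg.2 hεN.le) (hη_nonneg _)
  have hK_cont : Continuous K := continuous_const.mul (hη_cont.comp (continuous_const_smul _))
  have hK_supp : ∀ u, ε < ‖u‖ → K u = 0 := by
    intro u hu
    have : ε⁻¹ • u ∉ tsupport η := by
      intro h
      have := mem_closedBall_iff_norm.1 (hη_supp h)
      rw [sub_zero, norm_smul, norm_inv, Real.norm_of_nonneg hε.le] at this
      have : ‖u‖ ≤ ε := by
        rw [← one_mul ε]
        calc ‖u‖ = ε * (ε⁻¹ * ‖u‖) := by field_simp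
        _ ≤ ε * 1 := by nlinarith
        _ = 1 * ε := by ring
      linarith
    simp [hK, image_eq_zero_of_notMem_tsupport this]
  have hK_cs : HasCompactSupport K := by
    apply HasCompactSupport.of_support_subset_isCompact (isCompact_closedBall (0:EuclideanSpace ℝ (Fin N)) ε)
    intro u hu
    rw [mem_closedBall_iff_norm, sub_zero]
    by_contra h
    exact hu (hK_supp u (lt_of_not_ge h))
  have hK_int : Integrable K := hK_cont.integrable_of_hasCompactSupport hK_cs
  have hK_one : ∫ u, K u = 1 := by
    rw [MeasureTheory.integral_const_mul]
    have := MeasureTheory.Measure.integral_comp_inv_smul_of_nonneg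
      (volume : Measure (EuclideanSpace ℝ (Fin N))) η hε.le
    rw [finrank_euclideanSpace_fin, hη_int, smul_eq_mul, mul_one] at this
    rw [this]
    field_simp
  have hK_bd : ∃ C, ∀ u, ‖K u‖ ≤ C := hK_cs.exists_bound_of_continuous hK_cont
  obtain ⟨C, hC⟩ := hK_bd
  -- complex-cast kernel boundedness helper
  have hKc_bd : ∀ x : EuclideanSpace ℝ (Fin N),
      ∃ C', ∀ y, ‖((K (x - y) : ℝ) : ℂ)‖ ≤ C' := by
    intro x; exact ⟨C, fun y => by rw [Complex.norm_real]; exact hC _⟩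
  have hKc_meas : ∀ x : EuclideanSpace ℝ (Fin N),
      AEStronglyMeasurable (fun y => ((K (x - y) : ℝ) : ℂ)) volume := by
    intro x
    exact (Complex.continuous_ofReal.comp (hK_cont.comp (continuous_const.sub continuous_id))).aestronglyMeasurable
  have hKg : ∀ x, Integrable (fun y => ((K (x - y) : ℝ) : ℂ) * g y) :=
    fun x => hg.bdd_mul (hKc_meas x) (Eventually.of_forall (hKc_bd x).choose_spec)
  have hKcg : ∀ x, Integrable (fun y => ((K (x - y) : ℝ) : ℂ) * (c y * g y)) :=
    fun x => hcg.bdd_mul (hKc_meas x) (Eventually.of_forall (hKc_bd x).choose_spec)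
  -- pointwise identity and bound
  set A : EuclideanSpace ℝ (Fin N) → ℝ := fun x => ∫ y, (δ * ‖g y‖) * K (x - y) with hA
  have h_ptwise : ∀ x, ‖c x * (∫ y, ((K (x - y) : ℝ) : ℂ) * g y)
      - ∫ y, ((K (x - y) : ℝ) : ℂ) * (c y * g y)‖ ≤ A x := by
    intro x
    have hid : c x * (∫ y, ((K (x - y) : ℝ) : ℂ) * g y)
        - ∫ y, ((K (x - y) : ℝ) : ℂ) * (c y * g y)
        = ∫ y, ((K (x - y) : ℝ) : ℂ) * ((c x - c y) * g y) := by
      rw [← MeasureTheory.integral_const_mul, ← MeasureTheory.integral_sub ((hKg x).const_mul (c x)) (hKcg x)]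
      congr 1; funext y; ring
    rw [hid]
    refine MeasureTheory.norm_integral_le_of_norm_le ?_ (Eventually.of_forall ?_)
    · have hm : AEStronglyMeasurable (fun y => K (x - y)) volume :=
        (hK_cont.comp (continuous_const.sub continuous_id)).aestronglyMeasurable
      exact ((hg.norm.const_mul δ).bdd_mul hm (Eventually.of_forall fun y => hC _)).congr
        (Eventually.of_forall (fun y => mul_comm _ _))
    · intro y
      rw [norm_mul, norm_mul, Complex.norm_real, Real.norm_of_nonneg (hK_nonneg _)]
      by_cases hy : g y = 0
      · simp [hy, mul_nonneg, hK_nonneg, hδ]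
      · by_cases hKx : K (x - y) = 0
        · simp [hKx]
        · have hyt : y ∈ tsupport g := subset_tsupport g hy
          have hd : dist x y ≤ ε := by
            rw [dist_eq_norm]
            by_contra h
            exact hKx (hK_supp _ (lt_of_not_ge h))
          have := H x y hyt hd
          have h1 : ‖c x - c y‖ * ‖g y‖ ≤ δ * ‖g y‖ :=
            mul_le_mul_of_nonneg_right this (norm_nonneg _)
          calc K (x - y) * (‖c x - c y‖ * ‖g y‖)
              ≤ K (x - y) * (δ * ‖g y‖) := mul_le_mul_of_nonneg_left h1 (hK_nonneg _)
            _ = (δ * ‖g y‖) * K (x - y) := by ring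
  -- integrability of A on the product
  have hF : Integrable (fun p : EuclideanSpace ℝ (Fin N) × EuclideanSpace ℝ (Fin N) =>
      (δ * ‖g p.2‖) * K (p.1 - p.2)) (volume.prod volume) := by
    have := MeasureTheory.Integrable.convolution_integrand (ContinuousLinearMap.mul ℝ ℝ)
      (hg.norm.const_mul δ) hK_int
    simpa using this
  have hA_int : Integrable A := hF.integral_prod_left
  have hA_nonneg : ∀ x, 0 ≤ A x := fun x =>
    MeasureTheory.integral_nonneg (fun y => mul_nonneg (mul_nonneg hδ (norm_nonneg _)) (hK_nonneg _))
  have step1 : (∫ x in Ω, ‖c x * (∫ y, ((K (x - y) : ℝ) : ℂ) * g y)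
      - ∫ y, ((K (x - y) : ℝ) : ℂ) * (c y * g y)‖) ≤ ∫ x in Ω, A x := by
    refine MeasureTheory.integral_mono_of_nonneg (Eventually.of_forall (fun x => norm_nonneg _))
      hA_int.integrableOn (Eventually.of_forall (fun x => h_ptwise x))
  have step2 : (∫ x in Ω, A x) ≤ ∫ x, A x :=
    MeasureTheory.setIntegral_le_integral hA_int (Eventually.of_forall hA_nonneg)
  have step3 : (∫ x, A x) = δ * ∫ x, ‖g x‖ := by
    rw [hA]
    rw [MeasureTheory.integral_integral_swap hF]
    have : ∀ y : EuclideanSpace ℝ (Fin N),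
        (∫ x, (δ * ‖g y‖) * K (x - y)) = δ * ‖g y‖ := by
      intro y
      rw [MeasureTheory.integral_const_mul, MeasureTheory.integral_sub_right_eq_self K y, hK_one, mul_one]
    simp_rw [this]
    rw [MeasureTheory.integral_const_mul]
  have step4 : (∫ x, ‖g x‖) = ∫ x in Ω, ‖g x‖ := by
    rw [MeasureTheory.setIntegral_eq_integral_of_forall_compl_eq_zero]
    intro x hx
    have : g x = 0 := image_eq_zero_of_notMem_tsupport (fun h => hx (hgΩ h))
    simp [this]
  calc (∫ x in Ω, ‖c x * (∫ y, ((K (x - y) : ℝ) : ℂ) * g y)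
      - ∫ y, ((K (x - y) : ℝ) : ℂ) * (c y * g y)‖) ≤ ∫ x in Ω, A x := step1
    _ ≤ ∫ x, A x := step2
    _ = δ * ∫ x, ‖g x‖ := step3
    _ = δ * ∫ x in Ω, ‖g x‖ := by rw [step4]
/-- the commutator of multiplication by `c` with mollification tends to `0`
in `L^1(Ω)`; more precisely, if `|c y - c z| ≤ δ` whenever `|y - z| ≤ ε`, then the
`L^1(Ω)` norm of `c ⬝ (η_ε * g) - η_ε * (c g)` is at most `δ ‖g‖_{L^1(Ω)}`. -/
theorem stmt3 {N : ℕ}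
    (Ω : Set (EuclideanSpace ℝ (Fin N))) (hΩ : IsOpen Ω)
    (c : EuclideanSpace ℝ (Fin N) → ℂ) (g : EuclideanSpace ℝ (Fin N) → ℂ)
    (hg : Integrable g) (hgsupp : HasCompactSupport g) (hgΩ : tsupport g ⊆ Ω)
    (U : Set (EuclideanSpace ℝ (Fin N))) (hU : IsOpen U) (hgU : tsupport g ⊆ U)
    (hc : UniformContinuousOn c U)
    (η : EuclideanSpace ℝ (Fin N) → ℝ) (hη_smooth : ContDiff ℝ (⊤ : ℕ∞) η)
    (hη_nonneg : ∀ x, 0 ≤ η x) (hη_supp : tsupport η ⊆ closedBall 0 1)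
    (hη_int : ∫ x, η x = 1) :
    (∀ ε : ℝ, 0 < ε → ∀ δ : ℝ, (∀ y z, dist y z ≤ ε → ‖c y - c z‖ ≤ δ) →
      (∫ x in Ω, ‖c x * (∫ y, (((ε ^ N)⁻¹ * η (ε⁻¹ • (x - y)) : ℝ) : ℂ) * g y)
          - ∫ y, (((ε ^ N)⁻¹ * η (ε⁻¹ • (x - y)) : ℝ) : ℂ) * (c y * g y)‖)
        ≤ δ * ∫ x in Ω, ‖g x‖) ∧
    Tendsto (fun ε : ℝ =>
        ∫ x in Ω, ‖c x * (∫ y, (((ε ^ N)⁻¹ * η (ε⁻¹ • (x - y)) : ℝ) : ℂ) * g y)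
          - ∫ y, (((ε ^ N)⁻¹ * η (ε⁻¹ • (x - y)) : ℝ) : ℂ) * (c y * g y)‖)
      (nhdsWithin 0 (Set.Ioi 0)) (nhds 0) := by
  have hη_cont : Continuous η := hη_smooth.continuous
  have hcU : ContinuousOn c U := hc.continuousOn
  -- integrability of c * g
  have hcg : Integrable (fun y => c y * g y) := by
    obtain ⟨M, hM⟩ := (hgsupp : IsCompact (tsupport g)).exists_bound_of_continuousOn
      (hcU.mono hgU)
    have hmeas : AEStronglyMeasurable (fun y => c y * g y) volume := by
      have h1 : AEMeasurable c (volume.restrict U) := hcU.aemeasurable hU.measurableSet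
      have h2 : AEMeasurable (fun y => c y * g y) (volume.restrict U) :=
        h1.mul hg.aemeasurable.restrict
      have h3 : (fun y => c y * g y) = U.indicator (fun y => c y * g y) := by
        funext y
        by_cases hy : y ∈ U
        · simp [hy]
        · have : g y = 0 := image_eq_zero_of_notMem_tsupport (fun h => hy (hgU h))
          simp [this, hy]
      rw [h3]
      exact ((aemeasurable_indicator_iff hU.measurableSet).2 h2).aestronglyMeasurable
    refine (hg.norm.const_mul (max M 0)).mono' hmeas (Eventually.of_forall (fun y => ?_))
    by_cases hy : y ∈ tsupport g
    · rw [norm_mul]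
      exact mul_le_mul_of_nonneg_right ((hM y hy).trans (le_max_left _ _)) (norm_nonneg _)
    · have : g y = 0 := image_eq_zero_of_notMem_tsupport hy
      simp [this]
  constructor
  · intro ε hε δ hH
    have hδ : 0 ≤ δ := by
      have := hH 0 0 (by simp [hε.le])
      simpa using this
    exact aux_bound Ω c g hg hgΩ hcg η hη_cont hη_nonneg hη_supp hη_int ε δ hε hδ
      (fun x y _ hd => hH x y hd)
  · rw [NormedAddCommGroup.tendsto_nhds_zero]
    intro δ'' hδ''
    set I := ∫ x in Ω, ‖g x‖ with hIdef
    have hI0 : 0 ≤ I := MeasureTheory.integral_nonneg (fun x => norm_nonneg _)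
    have h2pos : (0:ℝ) < 2 * (I + 1) := by linarith
    set δ' := δ'' / (2 * (I + 1)) with hδ'def
    have hδ'pos : 0 < δ' := div_pos hδ'' h2pos
    obtain ⟨ε₀, hε₀, hucε₀⟩ := Metric.uniformContinuousOn_iff.1 hc δ' hδ'pos
    obtain ⟨r, hr, hrU⟩ :=
      (hgsupp : IsCompact (tsupport g)).exists_thickening_subset_open hU hgU
    filter_upwards [Ioo_mem_nhdsGT_of_mem
      (show (0:ℝ) ∈ Set.Ico 0 (min ε₀ r) from ⟨le_refl 0, lt_min hε₀ hr⟩)] with ε hεm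
    obtain ⟨hε0, hεlt⟩ := hεm
    have H : ∀ x y, y ∈ tsupport g → dist x y ≤ ε → ‖c x - c y‖ ≤ δ' := by
      intro x y hy hd
      have hyU : y ∈ U := hgU hy
      have hxU : x ∈ U := hrU (Metric.mem_thickening_iff.2
        ⟨y, hy, lt_of_le_of_lt hd (lt_of_lt_of_le hεlt (min_le_right _ _))⟩)
      have := hucε₀ x hxU y hyU (lt_of_le_of_lt hd (lt_of_lt_of_le hεlt (min_le_left _ _)))
      rw [dist_eq_norm] at this
      exact this.le
    have hb := aux_bound Ω c g hg hgΩ hcg η hη_cont hη_nonneg hη_supp hη_int ε δ'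
      hε0 hδ'pos.le H
    have hnn : (0:ℝ) ≤ ∫ x in Ω, ‖c x * (∫ y, (((ε ^ N)⁻¹ * η (ε⁻¹ • (x - y)) : ℝ) : ℂ) * g y)
          - ∫ y, (((ε ^ N)⁻¹ * η (ε⁻¹ • (x - y)) : ℝ) : ℂ) * (c y * g y)‖ :=
      MeasureTheory.integral_nonneg (fun x => norm_nonneg _)
    rw [Real.norm_of_nonneg hnn]
    have hkey : δ' * (2 * (I + 1)) = δ'' := div_mul_cancel₀ _ (ne_of_gt h2pos)
    calc (∫ x in Ω, ‖c x * (∫ y, (((ε ^ N)⁻¹ * η (ε⁻¹ • (x - y)) : ℝ) : ℂ) * g y)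
          - ∫ y, (((ε ^ N)⁻¹ * η (ε⁻¹ • (x - y)) : ℝ) : ℂ) * (c y * g y)‖)
        ≤ δ' * I := hb
      _ < δ'' := by nlinarith
end

section
/- Let X be a normed space, let ℱ : X → ℂ be linear, and let ‖·‖_A be a second seminorm on X (thought of as φ ↦ ‖A(x,D)φ‖_{L^1}). Suppose that for every sequence (φ_i) in X with ‖φ_i‖ → 0 and sup_i ‖φ_i‖_A < ∞ one has ℱ(φ_i) → 0. Then for every ε > 0 there exists θ > 0 such that |ℱ(φ)| ≤ θ‖φ‖ + ε‖φ‖_A for all φ ∈ X. Conversely, if such a θ exists for every ε > 0, then ℱ(φ_i) → 0 along every sequence with ‖φ_i‖ → 0 and sup_i ‖φ_i‖_A < ∞. -/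
open Filter Topology

/-!
Forward direction: if the sequential condition holds, a contradiction argument gives `η > 0`
with `‖F φ‖ ≤ ε` whenever `‖φ‖ ≤ η` and `pA φ ≤ 1`, i.e. on the unit ball of the seminorm
`‖·‖ / η + pA`; by homogeneity `‖F φ‖ ≤ ε (‖φ‖ / η + pA φ)`, so `θ = ε / η` works.
Converse: along a sequence with `pA (φ i) ≤ M`, the estimate with `ε` small against `M`
bounds `‖F (φ i)‖` by `θ ‖φ i‖ + ε M`, which is eventually small.
-/

section Homogeneity

variable {𝕜 X E : Type*} [RCLike 𝕜] [AddCommGroup X] [Module 𝕜 X]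
  [SeminormedAddCommGroup E] [NormedSpace 𝕜 E]

theorem LinearMap.norm_apply_le_mul_of_seminorm_le_one (f : X →ₗ[𝕜] E) (r : Seminorm 𝕜 X)
    {ε : ℝ} (h : ∀ x, r x ≤ 1 → ‖f x‖ ≤ ε) (x : X) :
    ‖f x‖ ≤ ε * r x := by
  -- Rescaling by `c⁻¹` for every `c > r x` and letting `c ↓ r x` also covers `r x = 0`.
  have rescaled : ∀ c > r x, ‖f x‖ ≤ ε * c := by
    intro c hc
    have hc₀ : 0 < c := (apply_nonneg r x).trans_lt hc
    have hnorm : ‖(c : 𝕜)⁻¹‖ = c⁻¹ := by simp [hc₀.le]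
    have hr : r ((c : 𝕜)⁻¹ • x) ≤ 1 := by
      rw [map_smul_eq_mul, hnorm, inv_mul_le_iff₀ hc₀, mul_one]
      exact hc.le
    have := h _ hr
    rwa [map_smul, norm_smul, hnorm, inv_mul_le_iff₀ hc₀, mul_comm] at this
  exact ge_of_tendsto ((continuous_const_mul ε).continuousWithinAt (s := Set.Ioi (r x)))
    (eventually_nhdsWithin_of_forall rescaled)

theorem LinearMap.norm_apply_le_of_le_of_le_one (f : X →ₗ[𝕜] E) (p q : Seminorm 𝕜 X)
    {ε η : ℝ} (hη : 0 < η) (h : ∀ x, p x ≤ η → q x ≤ 1 → ‖f x‖ ≤ ε) (x : X) :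
    ‖f x‖ ≤ ε / η * p x + ε * q x := by
  let r : Seminorm 𝕜 X := η.toNNReal⁻¹ • p + q
  have hr : ∀ y, r y = η⁻¹ * p y + q y := fun y => by simp [r, NNReal.smul_def, hη.le]
  have hbound : ∀ y, r y ≤ 1 → ‖f y‖ ≤ ε := by
    intro y hy
    have hp := mul_nonneg (inv_nonneg.2 hη.le) (apply_nonneg p y)
    have hq := apply_nonneg q y
    rw [hr] at hy
    refine h y ?_ (by linarith)
    simpa using (inv_mul_le_iff₀ hη).1 (show η⁻¹ * p y ≤ 1 by linarith)
  calc ‖f x‖ ≤ ε * r x := f.norm_apply_le_mul_of_seminorm_le_one r hbound x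
    _ = ε / η * p x + ε * q x := by rw [hr]; ring

end Homogeneity

section Sequences

variable {X E : Type*} [SeminormedAddCommGroup X] [SeminormedAddCommGroup E]

theorem exists_pos_norm_le_of_tendsto_of_le_one (f : X → E) (q : X → ℝ)
    (h : ∀ φ : ℕ → X, Tendsto (‖φ ·‖) atTop (𝓝 0) → (∀ i, q (φ i) ≤ 1) →
      Tendsto (f ∘ φ) atTop (𝓝 0))
    {ε : ℝ} (hε : 0 < ε) : ∃ η > 0, ∀ x, ‖x‖ ≤ η → q x ≤ 1 → ‖f x‖ ≤ ε := by
  by_contra! hbad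
  choose φ hφ_norm hφ_q hφ_f using fun n : ℕ => hbad (1 / (n + 1)) Nat.one_div_pos_of_nat
  have hφ : Tendsto (‖φ ·‖) atTop (𝓝 0) :=
    squeeze_zero (fun n => norm_nonneg _) hφ_norm tendsto_one_div_add_atTop_nhds_zero_nat
  obtain ⟨n, hn⟩ := ((h φ hφ hφ_q).norm.eventually_lt_const (by simpa using hε)).exists
  exact (hφ_f n).not_gt hn

theorem tendsto_of_forall_norm_le_mul_add (f : X → E) (q : X → ℝ)
    (h : ∀ ε > 0, ∃ θ : ℝ, ∀ x, ‖f x‖ ≤ θ * ‖x‖ + ε * q x)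
    {φ : ℕ → X} (hφ : Tendsto (‖φ ·‖) atTop (𝓝 0)) {M : ℝ} (hM : ∀ i, q (φ i) ≤ M) :
    Tendsto (f ∘ φ) atTop (𝓝 0) := by
  refine NormedAddGroup.tendsto_nhds_zero.2 fun δ hδ => ?_
  set ε := δ / (|M| + 1)
  have hε : 0 < ε := by positivity
  have hεM : ε * M < δ := calc
    ε * M ≤ ε * |M| := by gcongr; exact le_abs_self M
    _ < ε * (|M| + 1) := by gcongr; linarith
    _ = δ := div_mul_cancel₀ δ (by positivity)
  obtain ⟨θ, hθ⟩ := h ε hε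
  have hlim : Tendsto (fun i => θ * ‖φ i‖ + ε * M) atTop (𝓝 (ε * M)) := by
    simpa using (hφ.const_mul θ).add_const (ε * M)
  filter_upwards [hlim.eventually_lt_const hεM] with i hi
  calc ‖f (φ i)‖ ≤ θ * ‖φ i‖ + ε * q (φ i) := hθ (φ i)
    _ ≤ θ * ‖φ i‖ + ε * M := by gcongr; exact hM i
    _ < δ := hi

end Sequences

/-- abstract characterization of charges: a linear functional `F` on a normed
space `X`, together with a second seminorm `pA` (thought of as `φ ↦ ‖A(x,D)φ‖_{L^1}`),
vanishes along every sequence tending to `0` in norm with bounded `pA` if and only if for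
every `ε > 0` there is `θ > 0` with `|F φ| ≤ θ ‖φ‖ + ε pA φ` for all `φ`. -/
theorem stmt5 {X : Type*} [NormedAddCommGroup X] [NormedSpace ℂ X]
    (F : X →ₗ[ℂ] ℂ) (pA : Seminorm ℂ X) :
    (∀ φ : ℕ → X, Tendsto (fun i => ‖φ i‖) atTop (nhds 0) →
        BddAbove (Set.range fun i => pA (φ i)) →
        Tendsto (fun i => F (φ i)) atTop (nhds 0)) ↔
    (∀ ε : ℝ, 0 < ε → ∃ θ : ℝ, 0 < θ ∧ ∀ φ : X, ‖F φ‖ ≤ θ * ‖φ‖ + ε * pA φ) := by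
  constructor
  · intro h ε hε
    obtain ⟨η, hη, hF⟩ := exists_pos_norm_le_of_tendsto_of_le_one F pA
      (fun φ hφ hq => h φ hφ ⟨1, Set.forall_mem_range.2 hq⟩) hε
    exact ⟨ε / η, div_pos hε hη, F.norm_apply_le_of_le_of_le_one (normSeminorm ℂ X) pA hη hF⟩
  · rintro h φ hφ ⟨M, hM⟩
    exact tendsto_of_forall_norm_le_mul_add F pA (fun ε hε => (h ε hε).imp fun _ => And.right)
      hφ (fun i => hM ⟨i, rfl⟩)
end
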